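/- Let R be a transitive unital based ring (fusion ring) that is an indecomposable module over A ⊗ C^op for based subrings A, C. Then R_A · R_C = FPdim(A∩C) · R_R, where R_E denotes the regular element Σ_{X ∈ Irr(E)} FPdim(X)·X, and consequently FPdim(A)·FPdim(C) = FPdim(A∩C)·FPdim(R). -/
import Mathlib


open Finset

/-- A fusion ring presented by its structure constants on a finite basis. -/
structure FusionRingData (ι : Type*) [Fintype ι] [DecidableEq ι] where
  one : ι
  dual : ι → ι
  N : ι → ι → ι → ℕ
  assoc : ∀ i j k l, ∑ m : ι, N i j m * N m k l = ∑ m : ι, N j k m * N i m l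
  one_mul : ∀ i j, N one i j = if j = i then 1 else 0
  mul_one : ∀ i j, N i one j = if j = i then 1 else 0
  dual_dual : ∀ i, dual (dual i) = i
  frob1 : ∀ i j k, N i j k = N (dual i) k j
  frob2 : ∀ i j k, N i j k = N k (dual j) i

/-- A based subring of a fusion ring: a subset of the basis containing the unit,
closed under duality and under taking constituents of products. -/
structure BasedSubring {ι : Type*} [Fintype ι] [DecidableEq ι]
    (R : FusionRingData ι) where
  carrier : Finset ι
  one_mem : R.one ∈ carrier
  dual_mem : ∀ i ∈ carrier, R.dual i ∈ carrier
  mul_mem : ∀ i ∈ carrier, ∀ j ∈ carrier, ∀ k, R.N i j k ≠ 0 → k ∈ carrier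

/-- `d` is the Frobenius–Perron dimension character: a ring homomorphism
on the Grothendieck ring, positive on basis elements. -/
def IsFPdim {ι : Type*} [Fintype ι] [DecidableEq ι]
    (R : FusionRingData ι) (d : ι → ℝ) : Prop :=
  (∀ i, 0 < d i) ∧ ∀ i j, d i * d j = ∑ k : ι, (R.N i j k : ℝ) * d k


section Aux

variable {ι : Type*} [Fintype ι] [DecidableEq ι] (R : FusionRingData ι)

lemma FR_anti (i j k : ι) :
    R.N i j k = R.N (R.dual j) (R.dual i) (R.dual k) := by
  calc R.N i j k = R.N (R.dual i) k j := R.frob1 i j k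
    _ = R.N j (R.dual k) (R.dual i) := R.frob2 (R.dual i) k j
    _ = R.N (R.dual j) (R.dual i) (R.dual k) := R.frob1 j (R.dual k) (R.dual i)

lemma FR_one_dual : R.dual R.one = R.one := by
  have h1 : R.N R.one (R.dual R.one) R.one = 1 := by
    rw [R.frob2, R.dual_dual, R.mul_one]
    simp
  rw [R.one_mul] at h1
  by_contra h
  rw [if_neg (fun he => h he.symm)] at h1
  exact zero_ne_one h1

lemma FR_dual_bij : Function.Bijective R.dual :=
  Function.Involutive.bijective R.dual_dual

variable (d : ι → ℝ) (hd : IsFPdim R d)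
include hd

lemma FR_d_one : d R.one = 1 := by
  have h := hd.2 R.one R.one
  rw [Fintype.sum_eq_single R.one (fun x hx => by simp [R.one_mul, hx])] at h
  simp only [R.one_mul] at h
  norm_num at h
  nlinarith [hd.1 R.one]

lemma FR_trans (j k : ι) : ∃ i, R.N i j k ≠ 0 := by
  by_contra h
  push_neg at h
  have h2 : ∀ i, R.N k (R.dual j) i = 0 := fun i => by
    rw [← R.frob2]; exact h i
  have := hd.2 k (R.dual j)
  simp only [h2, Nat.cast_zero, zero_mul, Finset.sum_const_zero] at this
  nlinarith [hd.1 k, hd.1 (R.dual j)]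

lemma FR_char_mid (i k : ι) :
    ∑ j : ι, (R.N i j k : ℝ) * d j = d (R.dual i) * d k := by
  rw [hd.2 (R.dual i) k]
  exact Finset.sum_congr rfl fun j _ => by rw [← R.frob1]

lemma FR_char_mid' (j k : ι) :
    ∑ i : ι, (R.N i j k : ℝ) * d i = d k * d (R.dual j) := by
  rw [hd.2 k (R.dual j)]
  exact Finset.sum_congr rfl fun i _ => by rw [← R.frob2]

end Aux

lemma eigvec_unique {n : Type*} [Fintype n] [DecidableEq n] [Nonempty n]
    (M : n → n → ℝ) (hM : ∀ i j, 0 < M i j) (lam : ℝ) (d f : n → ℝ)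
    (hd : ∀ i, 0 < d i) (hf : ∀ i, 0 ≤ f i)
    (hMd : ∀ i, ∑ j, M i j * d j = lam * d i)
    (hMf : ∀ i, ∑ j, M i j * f j = lam * f i) :
    ∃ t, ∀ i, f i = t * d i := by
  obtain ⟨k0, -, hk0⟩ := Finset.exists_min_image Finset.univ (fun k => f k / d k)
    ⟨Classical.arbitrary n, Finset.mem_univ _⟩
  set t := f k0 / d k0 with ht
  refine ⟨t, ?_⟩
  set w : n → ℝ := fun i => f i - t * d i with hw
  have hwnn : ∀ i, 0 ≤ w i := by
    intro i
    have h1 : t ≤ f i / d i := hk0 i (Finset.mem_univ i)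
    have h2 := (le_div_iff₀ (hd i)).mp h1
    simp only [hw]; linarith
  have hwk0 : w k0 = 0 := by
    simp only [hw, ht]
    rw [div_mul_cancel₀ _ (hd k0).ne']
    ring
  have hMw : ∑ j, M k0 j * w j = 0 := by
    have : ∑ j, M k0 j * w j
        = (∑ j, M k0 j * f j) - t * ∑ j, M k0 j * d j := by
      rw [Finset.mul_sum, ← Finset.sum_sub_distrib]
      exact Finset.sum_congr rfl fun j _ => by simp only [hw]; ring
    rw [this, hMf, hMd]
    have hfk0 : f k0 - t * d k0 = 0 := hwk0
    have : f k0 = t * d k0 := by linarith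
    rw [this]; ring
  have hz : ∀ j, w j = 0 := by
    intro j
    have hterm : ∀ x ∈ Finset.univ, (0:ℝ) ≤ M k0 x * w x :=
      fun x _ => mul_nonneg (hM k0 x).le (hwnn x)
    have := (Finset.sum_eq_zero_iff_of_nonneg hterm).mp hMw j (Finset.mem_univ j)
    rcases mul_eq_zero.mp this with h | h
    · exact absurd h (hM k0 j).ne'
    · exact h
  intro i
  have := hz i
  simp only [hw] at this
  linarith

lemma FR_d_dual {ι : Type*} [Fintype ι] [DecidableEq ι] (R : FusionRingData ι)
    (d : ι → ℝ) (hd : IsFPdim R d) (i : ι) : d (R.dual i) = d i := by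
  have hne : Nonempty ι := ⟨R.one⟩
  set M : ι → ι → ℝ := fun j k => ∑ i : ι, (R.N i j k : ℝ) with hM
  have hMpos : ∀ j k, 0 < M j k := by
    intro j k
    obtain ⟨i0, hi0⟩ := FR_trans R d hd j k
    apply Finset.sum_pos' (fun x _ => by positivity)
    exact ⟨i0, Finset.mem_univ _, by exact_mod_cast Nat.pos_of_ne_zero hi0⟩
  have hMd : ∀ j, ∑ k, M j k * d k = (∑ i : ι, d i) * d j := by
    intro j
    simp only [hM, Finset.sum_mul]
    rw [Finset.sum_comm]
    exact Finset.sum_congr rfl fun i _ => (hd.2 i j).symm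
  have hMf : ∀ j, ∑ k, M j k * d (R.dual k) = (∑ i : ι, d i) * d (R.dual j) := by
    intro j
    simp only [hM, Finset.sum_mul]
    rw [Finset.sum_comm]
    have inner : ∀ i : ι, ∑ k : ι, (R.N i j k : ℝ) * d (R.dual k)
        = d (R.dual j) * d (R.dual i) := by
      intro i
      rw [hd.2 (R.dual j) (R.dual i)]
      apply Fintype.sum_bijective R.dual (FR_dual_bij R)
      intro k
      rw [FR_anti R i j k]
    calc ∑ i : ι, ∑ k : ι, (R.N i j k : ℝ) * d (R.dual k)
        = ∑ i : ι, d (R.dual j) * d (R.dual i) :=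
          Finset.sum_congr rfl fun i _ => inner i
      _ = ∑ i : ι, d (R.dual i) * d (R.dual j) :=
          Finset.sum_congr rfl fun i _ => mul_comm _ _
      _ = ∑ i : ι, d i * d (R.dual j) :=
          Fintype.sum_bijective R.dual (FR_dual_bij R) _ _ (fun k => rfl)
  obtain ⟨t, ht⟩ := eigvec_unique M hMpos _ d (fun k => d (R.dual k)) hd.1
    (fun k => (hd.1 _).le) hMd hMf
  have h1 := ht R.one
  rw [FR_one_dual] at h1
  have ht1 : t = 1 := by
    have := hd.1 R.one; nlinarith
  rw [ht i, ht1, one_mul]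

lemma FR_absA {ι : Type*} [Fintype ι] [DecidableEq ι] (R : FusionRingData ι)
    (d : ι → ℝ) (hd : IsFPdim R d) (A : BasedSubring R) (a : ι)
    (ha : a ∈ A.carrier) (k : ι) :
    ∑ i ∈ A.carrier, (R.N a i k : ℝ) * d i
      = if k ∈ A.carrier then d a * d k else 0 := by
  by_cases hk : k ∈ A.carrier
  · rw [if_pos hk]
    have hsub : ∑ i ∈ A.carrier, (R.N a i k : ℝ) * d i
        = ∑ i : ι, (R.N a i k : ℝ) * d i := by
      apply Finset.sum_subset (Finset.subset_univ _)
      intro x _ hx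
      have hx0 : R.N a x k = 0 := by
        by_contra h0
        rw [R.frob1] at h0
        exact hx (A.mul_mem _ (A.dual_mem a ha) _ hk _ h0)
      simp [hx0]
    rw [hsub]
    have h2 : ∑ i : ι, (R.N a i k : ℝ) * d i
        = ∑ i : ι, (R.N (R.dual a) k i : ℝ) * d i :=
      Finset.sum_congr rfl fun i _ => by rw [R.frob1 a i k]
    rw [h2, ← hd.2, FR_d_dual R d hd]
  · rw [if_neg hk]
    apply Finset.sum_eq_zero
    intro i hi
    have h0 : R.N a i k = 0 := by
      by_contra h0; exact hk (A.mul_mem a ha i hi k h0)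
    simp [h0]

lemma FR_absC {ι : Type*} [Fintype ι] [DecidableEq ι] (R : FusionRingData ι)
    (d : ι → ℝ) (hd : IsFPdim R d) (C : BasedSubring R) (c : ι)
    (hc : c ∈ C.carrier) (m : ι) :
    ∑ j ∈ C.carrier, (R.N j c m : ℝ) * d j
      = if m ∈ C.carrier then d c * d m else 0 := by
  by_cases hm : m ∈ C.carrier
  · rw [if_pos hm]
    have hsub : ∑ j ∈ C.carrier, (R.N j c m : ℝ) * d j
        = ∑ j : ι, (R.N j c m : ℝ) * d j := by
      apply Finset.sum_subset (Finset.subset_univ _)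
      intro x _ hx
      have hx0 : R.N x c m = 0 := by
        by_contra h0
        rw [R.frob2] at h0
        exact hx (C.mul_mem _ hm _ (C.dual_mem c hc) _ h0)
      simp [hx0]
    rw [hsub]
    have h2 : ∑ j : ι, (R.N j c m : ℝ) * d j
        = ∑ j : ι, (R.N m (R.dual c) j : ℝ) * d j :=
      Finset.sum_congr rfl fun j _ => by rw [R.frob2 j c m]
    rw [h2, ← hd.2, FR_d_dual R d hd]
    ring
  · rw [if_neg hm]
    apply Finset.sum_eq_zero
    intro j hj
    have h0 : R.N j c m = 0 := by
      by_contra h0; exact hm (C.mul_mem j hj c hc m h0)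
    simp [h0]

lemma FR_left_eig {ι : Type*} [Fintype ι] [DecidableEq ι] (R : FusionRingData ι)
    (d : ι → ℝ) (hd : IsFPdim R d) (A C : BasedSubring R) (a : ι)
    (ha : a ∈ A.carrier) (k : ι) :
    ∑ l : ι, (R.N a l k : ℝ) *
        (∑ i ∈ A.carrier, ∑ j ∈ C.carrier, d i * d j * (R.N i j l : ℝ))
      = d a * ∑ i ∈ A.carrier, ∑ j ∈ C.carrier, d i * d j * (R.N i j k : ℝ) := by
  calc ∑ l : ι, (R.N a l k : ℝ) *
        (∑ i ∈ A.carrier, ∑ j ∈ C.carrier, d i * d j * (R.N i j l : ℝ))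
      = ∑ i ∈ A.carrier, ∑ j ∈ C.carrier, d i * d j *
          ∑ l : ι, (R.N i j l : ℝ) * (R.N a l k : ℝ) := by
        conv_lhs =>
          enter [2, l]
          rw [Finset.mul_sum]
          enter [2, i]
          rw [Finset.mul_sum]
        rw [Finset.sum_comm]
        refine Finset.sum_congr rfl fun i _ => ?_
        rw [Finset.sum_comm]
        refine Finset.sum_congr rfl fun j _ => ?_
        rw [Finset.mul_sum]
        exact Finset.sum_congr rfl fun l _ => by ring
    _ = ∑ i ∈ A.carrier, ∑ j ∈ C.carrier, d i * d j *
          ∑ m : ι, (R.N a i m : ℝ) * (R.N m j k : ℝ) := by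
        refine Finset.sum_congr rfl fun i _ => Finset.sum_congr rfl fun j _ => ?_
        congr 1
        exact_mod_cast (R.assoc a i j k).symm
    _ = ∑ j ∈ C.carrier, ∑ m : ι,
          (∑ i ∈ A.carrier, (R.N a i m : ℝ) * d i) * (d j * (R.N m j k : ℝ)) := by
        rw [Finset.sum_comm]
        refine Finset.sum_congr rfl fun j _ => ?_
        calc ∑ i ∈ A.carrier, d i * d j * ∑ m : ι, (R.N a i m : ℝ) * (R.N m j k : ℝ)
            = ∑ i ∈ A.carrier, ∑ m : ι,
                ((R.N a i m : ℝ) * d i) * (d j * (R.N m j k : ℝ)) := by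
              refine Finset.sum_congr rfl fun i _ => ?_
              rw [Finset.mul_sum]
              exact Finset.sum_congr rfl fun m _ => by ring
          _ = ∑ m : ι, ∑ i ∈ A.carrier,
                ((R.N a i m : ℝ) * d i) * (d j * (R.N m j k : ℝ)) := Finset.sum_comm
          _ = ∑ m : ι, (∑ i ∈ A.carrier, (R.N a i m : ℝ) * d i)
                * (d j * (R.N m j k : ℝ)) :=
              Finset.sum_congr rfl fun m _ => by rw [Finset.sum_mul]
    _ = ∑ j ∈ C.carrier, ∑ m : ι,
          (if m ∈ A.carrier then d a * d m else 0) * (d j * (R.N m j k : ℝ)) := by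
        refine Finset.sum_congr rfl fun j _ => Finset.sum_congr rfl fun m _ => ?_
        rw [FR_absA R d hd A a ha m]
    _ = ∑ j ∈ C.carrier, ∑ m ∈ A.carrier, d a * d m * (d j * (R.N m j k : ℝ)) := by
        refine Finset.sum_congr rfl fun j _ => ?_
        simp only [ite_mul, zero_mul]
        rw [Finset.sum_ite_mem, Finset.univ_inter]
    _ = d a * ∑ i ∈ A.carrier, ∑ j ∈ C.carrier, d i * d j * (R.N i j k : ℝ) := by
        rw [Finset.mul_sum]
        rw [Finset.sum_comm]
        refine Finset.sum_congr rfl fun m _ => ?_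
        rw [Finset.mul_sum]
        exact Finset.sum_congr rfl fun j _ => by ring

lemma FR_right_eig {ι : Type*} [Fintype ι] [DecidableEq ι] (R : FusionRingData ι)
    (d : ι → ℝ) (hd : IsFPdim R d) (A C : BasedSubring R) (c : ι)
    (hc : c ∈ C.carrier) (k : ι) :
    ∑ l : ι, (R.N l c k : ℝ) *
        (∑ i ∈ A.carrier, ∑ j ∈ C.carrier, d i * d j * (R.N i j l : ℝ))
      = d c * ∑ i ∈ A.carrier, ∑ j ∈ C.carrier, d i * d j * (R.N i j k : ℝ) := by
  calc ∑ l : ι, (R.N l c k : ℝ) *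
        (∑ i ∈ A.carrier, ∑ j ∈ C.carrier, d i * d j * (R.N i j l : ℝ))
      = ∑ i ∈ A.carrier, ∑ j ∈ C.carrier, d i * d j *
          ∑ l : ι, (R.N i j l : ℝ) * (R.N l c k : ℝ) := by
        conv_lhs =>
          enter [2, l]
          rw [Finset.mul_sum]
          enter [2, i]
          rw [Finset.mul_sum]
        rw [Finset.sum_comm]
        refine Finset.sum_congr rfl fun i _ => ?_
        rw [Finset.sum_comm]
        refine Finset.sum_congr rfl fun j _ => ?_
        rw [Finset.mul_sum]
        exact Finset.sum_congr rfl fun l _ => by ring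
    _ = ∑ i ∈ A.carrier, ∑ j ∈ C.carrier, d i * d j *
          ∑ m : ι, (R.N j c m : ℝ) * (R.N i m k : ℝ) := by
        refine Finset.sum_congr rfl fun i _ => Finset.sum_congr rfl fun j _ => ?_
        congr 1
        exact_mod_cast R.assoc i j c k
    _ = ∑ i ∈ A.carrier, ∑ m : ι,
          (∑ j ∈ C.carrier, (R.N j c m : ℝ) * d j) * (d i * (R.N i m k : ℝ)) := by
        refine Finset.sum_congr rfl fun i _ => ?_
        calc ∑ j ∈ C.carrier, d i * d j * ∑ m : ι, (R.N j c m : ℝ) * (R.N i m k : ℝ)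
            = ∑ j ∈ C.carrier, ∑ m : ι,
                ((R.N j c m : ℝ) * d j) * (d i * (R.N i m k : ℝ)) := by
              refine Finset.sum_congr rfl fun j _ => ?_
              rw [Finset.mul_sum]
              exact Finset.sum_congr rfl fun m _ => by ring
          _ = ∑ m : ι, ∑ j ∈ C.carrier,
                ((R.N j c m : ℝ) * d j) * (d i * (R.N i m k : ℝ)) := Finset.sum_comm
          _ = ∑ m : ι, (∑ j ∈ C.carrier, (R.N j c m : ℝ) * d j)
                * (d i * (R.N i m k : ℝ)) :=
              Finset.sum_congr rfl fun m _ => by rw [Finset.sum_mul]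
    _ = ∑ i ∈ A.carrier, ∑ m : ι,
          (if m ∈ C.carrier then d c * d m else 0) * (d i * (R.N i m k : ℝ)) := by
        refine Finset.sum_congr rfl fun i _ => Finset.sum_congr rfl fun m _ => ?_
        rw [FR_absC R d hd C c hc m]
    _ = ∑ i ∈ A.carrier, ∑ m ∈ C.carrier, d c * d m * (d i * (R.N i m k : ℝ)) := by
        refine Finset.sum_congr rfl fun i _ => ?_
        simp only [ite_mul, zero_mul]
        rw [Finset.sum_ite_mem, Finset.univ_inter]
    _ = d c * ∑ i ∈ A.carrier, ∑ j ∈ C.carrier, d i * d j * (R.N i j k : ℝ) := by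
        rw [Finset.mul_sum]
        refine Finset.sum_congr rfl fun i _ => ?_
        rw [Finset.mul_sum]
        exact Finset.sum_congr rfl fun j _ => by ring

lemma FR_Q_eig {ι : Type*} [Fintype ι] [DecidableEq ι] (R : FusionRingData ι)
    (d : ι → ℝ) (A C : BasedSubring R) (v : ι → ℝ)
    (hA : ∀ a ∈ A.carrier, ∀ k, ∑ l : ι, (R.N a l k : ℝ) * v l = d a * v k)
    (hC : ∀ c ∈ C.carrier, ∀ k, ∑ l : ι, (R.N l c k : ℝ) * v l = d c * v k)
    (k : ι) :
    ∑ l : ι, (∑ a ∈ A.carrier, ∑ c ∈ C.carrier,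
        d a * d c * ∑ m : ι, (R.N a l m : ℝ) * (R.N m c k : ℝ)) * v l
      = ((∑ a ∈ A.carrier, d a ^ 2) * (∑ c ∈ C.carrier, d c ^ 2)) * v k := by
  calc ∑ l : ι, (∑ a ∈ A.carrier, ∑ c ∈ C.carrier,
        d a * d c * ∑ m : ι, (R.N a l m : ℝ) * (R.N m c k : ℝ)) * v l
      = ∑ a ∈ A.carrier, ∑ c ∈ C.carrier, d a * d c *
          ∑ m : ι, (∑ l : ι, (R.N a l m : ℝ) * v l) * (R.N m c k : ℝ) := by
        conv_lhs =>
          enter [2, l]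
          rw [Finset.sum_mul]
          enter [2, a]
          rw [Finset.sum_mul]
        rw [Finset.sum_comm]
        refine Finset.sum_congr rfl fun a _ => ?_
        rw [Finset.sum_comm]
        refine Finset.sum_congr rfl fun c _ => ?_
        simp only [Finset.mul_sum, Finset.sum_mul]
        rw [Finset.sum_comm]
        exact Finset.sum_congr rfl fun m _ => Finset.sum_congr rfl fun l _ => by ring
    _ = ∑ a ∈ A.carrier, ∑ c ∈ C.carrier, d a * d c *
          ∑ m : ι, (d a * v m) * (R.N m c k : ℝ) := by
        refine Finset.sum_congr rfl fun a ha => Finset.sum_congr rfl fun c _ => ?_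
        congr 1
        exact Finset.sum_congr rfl fun m _ => by rw [hA a ha m]
    _ = ∑ a ∈ A.carrier, ∑ c ∈ C.carrier, d a * d c * (d a * (d c * v k)) := by
        refine Finset.sum_congr rfl fun a _ => Finset.sum_congr rfl fun c hc => ?_
        congr 1
        calc ∑ m : ι, (d a * v m) * (R.N m c k : ℝ)
            = d a * ∑ m : ι, (R.N m c k : ℝ) * v m := by
              rw [Finset.mul_sum]; exact Finset.sum_congr rfl fun m _ => by ring
          _ = d a * (d c * v k) := by rw [hC c hc k]
    _ = ((∑ a ∈ A.carrier, d a ^ 2) * (∑ c ∈ C.carrier, d c ^ 2)) * v k := by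
        rw [Finset.sum_mul_sum, Finset.sum_mul]
        refine Finset.sum_congr rfl fun a _ => ?_
        rw [Finset.sum_mul]
        exact Finset.sum_congr rfl fun c _ => by ring


/-- If `R` factorizes as `R = AC` (every basis element of `R` is a constituent of
some product of basis elements of `A` and `C`), then `R_A · R_C = FPdim(A ∩ C) · R_R`,
and consequently `FPdim(A) · FPdim(C) = FPdim(A ∩ C) · FPdim(R)`. -/
theorem regular_product_of_factorization
    {ι : Type*} [Fintype ι] [DecidableEq ι] (R : FusionRingData ι)
    (d : ι → ℝ) (hd : IsFPdim R d) (A C : BasedSubring R)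
    (hfac : ∀ k : ι, ∃ i ∈ A.carrier, ∃ j ∈ C.carrier, R.N i j k ≠ 0) :
    (∀ k : ι,
        ∑ i ∈ A.carrier, ∑ j ∈ C.carrier, d i * d j * (R.N i j k : ℝ)
          = (∑ z ∈ A.carrier ∩ C.carrier, d z ^ 2) * d k) ∧
    (∑ i ∈ A.carrier, d i ^ 2) * (∑ j ∈ C.carrier, d j ^ 2)
        = (∑ z ∈ A.carrier ∩ C.carrier, d z ^ 2) * ∑ k : ι, d k ^ 2 := by
  classical
  haveI hne : Nonempty ι := ⟨R.one⟩
  have hdd := FR_d_dual R d hd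
  set S : ℝ := ∑ z ∈ A.carrier ∩ C.carrier, d z ^ 2 with hS
  set f : ι → ℝ := fun k =>
    ∑ i ∈ A.carrier, ∑ j ∈ C.carrier, d i * d j * (R.N i j k : ℝ) with hfdef
  have hfnn : ∀ k, 0 ≤ f k := fun k =>
    Finset.sum_nonneg fun i _ => Finset.sum_nonneg fun j _ =>
      mul_nonneg (mul_nonneg (hd.1 i).le (hd.1 j).le) (by positivity)
  set Q : ι → ι → ℝ := fun k l => ∑ a ∈ A.carrier, ∑ c ∈ C.carrier,
      d a * d c * ∑ m : ι, (R.N a l m : ℝ) * (R.N m c k : ℝ) with hQdef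
  have hQnn : ∀ k l, 0 ≤ Q k l := fun k l =>
    Finset.sum_nonneg fun a _ => Finset.sum_nonneg fun c _ =>
      mul_nonneg (mul_nonneg (hd.1 a).le (hd.1 c).le) (by positivity)
  set lam : ℝ := (∑ a ∈ A.carrier, d a ^ 2) * (∑ c ∈ C.carrier, d c ^ 2) with hlam
  have hQf : ∀ k, ∑ l, Q k l * f l = lam * f k := fun k =>
    FR_Q_eig R d A C f (fun a ha k => FR_left_eig R d hd A C a ha k)
      (fun c hc k => FR_right_eig R d hd A C c hc k) k
  have hQd : ∀ k, ∑ l, Q k l * d l = lam * d k := fun k =>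
    FR_Q_eig R d A C d
      (fun a _ k => by rw [FR_char_mid R d hd a k, hdd])
      (fun c _ k => by rw [FR_char_mid' R d hd c k, hdd]; ring) k
  have hQk1 : ∀ k, 0 < Q k R.one := by
    intro k
    obtain ⟨i, hiA, j, hjC, hijk⟩ := hfac k
    have hterm : 0 < d i * d j *
        ∑ m : ι, (R.N i R.one m : ℝ) * (R.N m j k : ℝ) := by
      have hin : (R.N i R.one i : ℝ) * (R.N i j k : ℝ)
          ≤ ∑ m : ι, (R.N i R.one m : ℝ) * (R.N m j k : ℝ) :=
        Finset.single_le_sum (f := fun m => (R.N i R.one m : ℝ) * (R.N m j k : ℝ))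
          (fun m _ => by positivity) (Finset.mem_univ i)
      have h1 : (R.N i R.one i : ℝ) = 1 := by rw [R.mul_one]; simp
      have h2 : (0:ℝ) < (R.N i j k : ℝ) := by
        exact_mod_cast Nat.pos_of_ne_zero hijk
      rw [h1, one_mul] at hin
      exact mul_pos (mul_pos (hd.1 i) (hd.1 j)) (lt_of_lt_of_le h2 hin)
    apply Finset.sum_pos'
      (fun a _ => Finset.sum_nonneg fun c _ =>
        mul_nonneg (mul_nonneg (hd.1 a).le (hd.1 c).le) (by positivity))
    refine ⟨i, hiA, ?_⟩
    exact Finset.sum_pos'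
      (fun c _ => mul_nonneg (mul_nonneg (hd.1 i).le (hd.1 c).le) (by positivity))
      ⟨j, hjC, hterm⟩
  have hQ1l : ∀ l, 0 < Q R.one l := by
    intro l
    obtain ⟨i, hiA, j, hjC, hijl⟩ := hfac l
    have ha' : R.dual i ∈ A.carrier := A.dual_mem i hiA
    have hc' : R.dual j ∈ C.carrier := C.dual_mem j hjC
    have hterm : 0 < d (R.dual i) * d (R.dual j) *
        ∑ m : ι, (R.N (R.dual i) l m : ℝ) * (R.N m (R.dual j) R.one : ℝ) := by
      have hin : (R.N (R.dual i) l j : ℝ) * (R.N j (R.dual j) R.one : ℝ)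
          ≤ ∑ m : ι, (R.N (R.dual i) l m : ℝ) * (R.N m (R.dual j) R.one : ℝ) :=
        Finset.single_le_sum
          (f := fun m => (R.N (R.dual i) l m : ℝ) * (R.N m (R.dual j) R.one : ℝ))
          (fun m _ => by positivity) (Finset.mem_univ j)
      have h2 : (R.N j (R.dual j) R.one : ℝ) = 1 := by
        rw [R.frob2, R.dual_dual, R.one_mul]; simp
      have h1 : R.N (R.dual i) l j = R.N i j l := (R.frob1 i j l).symm
      have h3 : (0:ℝ) < (R.N (R.dual i) l j : ℝ) := by
        rw [h1] at *
        exact_mod_cast Nat.pos_of_ne_zero hijl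
      rw [h2, mul_one] at hin
      exact mul_pos (mul_pos (hd.1 _) (hd.1 _)) (lt_of_lt_of_le h3 hin)
    apply Finset.sum_pos'
      (fun a _ => Finset.sum_nonneg fun c _ =>
        mul_nonneg (mul_nonneg (hd.1 a).le (hd.1 c).le) (by positivity))
    refine ⟨R.dual i, ha', ?_⟩
    exact Finset.sum_pos'
      (fun c _ => mul_nonneg (mul_nonneg (hd.1 _).le (hd.1 c).le) (by positivity))
      ⟨R.dual j, hc', hterm⟩
  set M : ι → ι → ℝ := fun k l => ∑ m : ι, Q k m * Q m l with hMdef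
  have hMpos : ∀ k l, 0 < M k l := by
    intro k l
    have hin : Q k R.one * Q R.one l ≤ ∑ m, Q k m * Q m l :=
      Finset.single_le_sum (fun m _ => mul_nonneg (hQnn k m) (hQnn m l))
        (Finset.mem_univ R.one)
    exact lt_of_lt_of_le (mul_pos (hQk1 k) (hQ1l l)) hin
  have hMeig : ∀ v : ι → ℝ, (∀ k, ∑ l, Q k l * v l = lam * v k) →
      ∀ k, ∑ l, M k l * v l = (lam * lam) * v k := by
    intro v hv k
    calc ∑ l, M k l * v l = ∑ l, ∑ m, Q k m * Q m l * v l := by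
          refine Finset.sum_congr rfl fun l _ => ?_
          rw [Finset.sum_mul]
      _ = ∑ m, Q k m * ∑ l, Q m l * v l := by
          rw [Finset.sum_comm]
          refine Finset.sum_congr rfl fun m _ => ?_
          rw [Finset.mul_sum]
          exact Finset.sum_congr rfl fun l _ => by ring
      _ = ∑ m, Q k m * (lam * v m) := Finset.sum_congr rfl fun m _ => by rw [hv m]
      _ = lam * ∑ m, Q k m * v m := by
          rw [Finset.mul_sum]; exact Finset.sum_congr rfl fun m _ => by ring
      _ = lam * lam * v k := by rw [hv k]; ring
  obtain ⟨t, htf⟩ := eigvec_unique M hMpos (lam * lam) d f hd.1 hfnn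
    (hMeig d hQd) (hMeig f hQf)
  have hd1 : d R.one = 1 := FR_d_one R d hd
  have hset : C.carrier.filter (fun j => R.dual j ∈ A.carrier)
      = A.carrier ∩ C.carrier := by
    ext x
    simp only [Finset.mem_filter, Finset.mem_inter]
    constructor
    · rintro ⟨hxC, hxA⟩
      refine ⟨?_, hxC⟩
      have := A.dual_mem _ hxA
      rwa [R.dual_dual] at this
    · rintro ⟨hxA, hxC⟩
      exact ⟨hxC, A.dual_mem _ hxA⟩
  have hfone : f R.one = S := by
    calc f R.one
        = ∑ i ∈ A.carrier, ∑ j ∈ C.carrier,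
            (if i = R.dual j then d i * d j else 0) := by
          refine Finset.sum_congr rfl fun i _ => Finset.sum_congr rfl fun j _ => ?_
          have hone : R.N i j R.one = if i = R.dual j then 1 else 0 := by
            rw [R.frob2, R.one_mul]
          rw [hone]
          by_cases h : i = R.dual j <;> simp [h]
      _ = ∑ j ∈ C.carrier, ∑ i ∈ A.carrier,
            (if i = R.dual j then d i * d j else 0) := Finset.sum_comm
      _ = ∑ j ∈ C.carrier,
            (if R.dual j ∈ A.carrier then d (R.dual j) * d j else 0) :=
          Finset.sum_congr rfl fun j _ => Finset.sum_ite_eq' A.carrier (R.dual j) _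
      _ = ∑ j ∈ C.carrier, (if R.dual j ∈ A.carrier then d j ^ 2 else 0) := by
          refine Finset.sum_congr rfl fun j _ => ?_
          by_cases h : R.dual j ∈ A.carrier
          · rw [if_pos h, if_pos h, hdd j]; ring
          · rw [if_neg h, if_neg h]
      _ = S := by rw [hS, ← Finset.sum_filter, hset]
  have htS : t = S := by
    have h := htf R.one
    rw [hfone, hd1, mul_one] at h
    exact h.symm
  have part1 : ∀ k, f k = S * d k := fun k => by rw [htf k, htS]
  refine ⟨part1, ?_⟩
  have h1 : ∑ k : ι, f k * d k = S * ∑ k : ι, d k ^ 2 := by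
    calc ∑ k : ι, f k * d k = ∑ k : ι, S * d k * d k :=
          Finset.sum_congr rfl fun k _ => by rw [part1 k]
      _ = S * ∑ k : ι, d k ^ 2 := by
          rw [Finset.mul_sum]; exact Finset.sum_congr rfl fun k _ => by ring
  have h2 : ∑ k : ι, f k * d k = lam := by
    calc ∑ k : ι, f k * d k
        = ∑ i ∈ A.carrier, ∑ j ∈ C.carrier, d i * d j *
            ∑ k : ι, (R.N i j k : ℝ) * d k := by
          simp only [hfdef, Finset.sum_mul]
          rw [Finset.sum_comm]
          refine Finset.sum_congr rfl fun i _ => ?_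
          rw [Finset.sum_comm]
          refine Finset.sum_congr rfl fun j _ => ?_
          rw [Finset.mul_sum]
          exact Finset.sum_congr rfl fun k _ => by ring
      _ = ∑ i ∈ A.carrier, ∑ j ∈ C.carrier, d i ^ 2 * d j ^ 2 := by
          refine Finset.sum_congr rfl fun i _ => Finset.sum_congr rfl fun j _ => ?_
          rw [← hd.2 i j]; ring
      _ = lam := by rw [hlam, Finset.sum_mul_sum]
  rw [hlam] at h2
  linarith
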